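/- arXiv:2501.16816 — 2 statements merged into one kernel-verified Lean document; each statement's English description precedes it below -/
import Mathlib

section
/- Let f : [0,∞) → [0,∞) be a non-decreasing function that is left-continuous on (0,∞), continuous at 0, and has only finitely many points of discontinuity. Let x = (x_N)_{N∈ℕ} be a sequence in [0,1). If there exists k ∈ ℕ and infinitely many N ∈ ℕ such that the finite point set x_1,…,x_N has at most k distinct gap lengths, then x does not have f-pair correlations. -/
open Filter Set Asymptotics

/-- `nid x` is the distance from `x` to the nearest integer. -/
noncomputable def nid (x : ℝ) : ℝ := |x - round x|

/-- `pairCount x s N` is the pair counting function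
`R(s,N) = #{(i,j) : 1 ≤ i ≠ j ≤ N, ‖x i - x j‖ ≤ s/N}`. -/
noncomputable def pairCount (x : ℕ → ℝ) (s : ℝ) (N : ℕ) : ℕ :=
  {p : ℕ × ℕ | 1 ≤ p.1 ∧ p.1 ≤ N ∧ 1 ≤ p.2 ∧ p.2 ≤ N ∧ p.1 ≠ p.2 ∧
      nid (x p.1 - x p.2) ≤ s / N}.ncard

/-- The sequence `x` has `f`-pair correlations:
`R(s,N)/N → f s` for every `s ≥ 0`. -/
def HasPairCorr (x : ℕ → ℝ) (f : ℝ → ℝ) : Prop :=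
  ∀ s : ℝ, 0 ≤ s →
    Tendsto (fun N : ℕ => (pairCount x s N : ℝ) / N) atTop (nhds (f s))

/-- Given a (sorted) tuple `y : Fin N → ℝ`, the set of gap lengths: for every `i`
the torus distance between `y i` and its circular successor `y (i+1 mod N)`. -/
noncomputable def gapLengths {N : ℕ} (y : Fin N → ℝ) : Finset ℝ :=
  Finset.image (fun i : Fin N => nid (y (finRotate N i) - y i)) Finset.univ

/-- The point set `x 1, …, x N` has at most `k` distinct gap lengths: after sorting
the points (by a permutation `σ`), the distances (w.r.t. the torus metric) between
circularly consecutive elements take at most `k` distinct values. -/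
noncomputable def AtMostGaps (x : ℕ → ℝ) (N k : ℕ) : Prop :=
  ∃ σ : Equiv.Perm (Fin N), Monotone (fun i : Fin N => x ((σ i : ℕ) + 1)) ∧
    (gapLengths (fun i : Fin N => x ((σ i : ℕ) + 1))).card ≤ k

/-!
If `x` had `f`-pair correlations, then `R(0, N) = O(N)`, so by Cauchy–Schwarz the first `N`
points take `≫ N` distinct values and therefore have `≫ N` positive gaps. With at most `k`
gap lengths, one length `L_N` is shared by `≫ N / k` gaps, and as the gaps sum to at most `1`,
`N L_N` stays bounded. Each such gap is a pair at distance exactly `L_N`, counted by `R(s, M)`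
for `M ≥ N` exactly when `s ≥ M L_N`. Passing to a cluster point `t` of `N L_N` and taking
`M = λ N`, the limit `f` jumps by `≫ 1 / λ` at every `λ t`, `λ = 1, 2, …`: for `t = 0` this
contradicts continuity at `0`, for `t > 0` it gives infinitely many discontinuities.
-/

lemma nid_nonneg (t : ℝ) : 0 ≤ nid t := abs_nonneg _

lemma nid_le_abs (t : ℝ) : nid t ≤ |t| := by simpa [nid] using round_le t 0

lemma nid_le_one_add {t : ℝ} (ht : -1 ≤ t) : nid t ≤ 1 + t := by
  simpa [nid, abs_of_nonneg (by linarith : 0 ≤ t + 1), add_comm] using round_le t (-1)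

lemma nid_ne_zero {t : ℝ} (h0 : 0 < t) (h1 : t < 1) : nid t ≠ 0 := by
  rw [nid, abs_ne_zero, sub_ne_zero]
  intro h
  have h0' : (0 : ℤ) < round t := by exact_mod_cast h ▸ h0
  have h1' : round t < (1 : ℤ) := by exact_mod_cast h ▸ h1
  omega

def pairSet (x : ℕ → ℝ) (s : ℝ) (N : ℕ) : Set (ℕ × ℕ) :=
  {p | 1 ≤ p.1 ∧ p.1 ≤ N ∧ 1 ≤ p.2 ∧ p.2 ≤ N ∧ p.1 ≠ p.2 ∧ nid (x p.1 - x p.2) ≤ s / N}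

lemma pairCount_eq_ncard (x : ℕ → ℝ) (s : ℝ) (N : ℕ) :
    pairCount x s N = (pairSet x s N).ncard := rfl

lemma pairSet_finite (x : ℕ → ℝ) (s : ℝ) (N : ℕ) : (pairSet x s N).Finite :=
  ((finite_Icc 1 N).prod (finite_Icc 1 N)).subset
    fun _ hp => ⟨⟨hp.1, hp.2.1⟩, hp.2.2.1, hp.2.2.2.1⟩

lemma pairSet_mono (x : ℕ → ℝ) {a b : ℝ} (hab : a ≤ b) (N : ℕ) :
    pairSet x a N ⊆ pairSet x b N :=
  fun _ ⟨h1, h2, h3, h4, h5, h6⟩ =>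
    ⟨h1, h2, h3, h4, h5, h6.trans (div_le_div_of_nonneg_right hab N.cast_nonneg)⟩

def PairCountJumps (x : ℕ → ℝ) (N : ℕ) (L δ : ℝ) : Prop :=
  ∀ M : ℕ, N ≤ M → ∀ a b : ℝ, a < M * L → M * L ≤ b →
    (pairCount x a M : ℝ) + δ ≤ pairCount x b M

lemma pairCountJumps_card {x : ℕ → ℝ} {S : Finset (ℕ × ℕ)} {N : ℕ} {L : ℝ}
    (hS : ∀ p ∈ S, 1 ≤ p.1 ∧ p.1 ≤ N ∧ 1 ≤ p.2 ∧ p.2 ≤ N ∧ p.1 ≠ p.2 ∧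
      nid (x p.1 - x p.2) = L) :
    PairCountJumps x N L S.card := by
  intro M hNM a b ha hb
  have hS' : ∀ p ∈ S, p ∈ pairSet x b M ∧ p ∉ pairSet x a M := by
    intro p hp
    obtain ⟨h1, h2, h3, h4, h5, h6⟩ := hS p hp
    have hM : (0 : ℝ) < M := by exact_mod_cast (h1.trans h2).trans hNM
    refine ⟨⟨h1, h2.trans hNM, h3, h4.trans hNM, h5, ?_⟩, fun hpa => ?_⟩
    · rw [h6, le_div_iff₀ hM]
      linarith
    · have hLa := hpa.2.2.2.2.2
      rw [h6, le_div_iff₀ hM] at hLa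
      linarith
  have hcard : pairCount x a M + S.card ≤ pairCount x b M := by
    rw [pairCount_eq_ncard, pairCount_eq_ncard, ← Set.ncard_coe_finset S,
      ← Set.ncard_union_eq (Set.disjoint_right.mpr fun p hp => (hS' p hp).2)
        (pairSet_finite x a M) S.finite_toSet]
    exact Set.ncard_le_ncard
      (Set.union_subset (pairSet_mono x (ha.le.trans hb) M) fun p hp => (hS' p hp).1)
      (pairSet_finite x b M)
  exact_mod_cast hcard

lemma PairCountJumps.div_add_le_div {x : ℕ → ℝ} {N : ℕ} {L c : ℝ} (hJ : PairCountJumps x N L (N / c))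
    (hN : 1 ≤ N) (m : ℕ) {a b : ℝ} (ha : a < (m + 1) * (N * L))
    (hb : (m + 1) * (N * L) ≤ b) :
    (pairCount x a ((m + 1) * N) : ℝ) / ((m + 1) * N : ℕ) + 1 / c / (m + 1) ≤
      (pairCount x b ((m + 1) * N) : ℝ) / ((m + 1) * N : ℕ) := by
  have hM : (((m + 1) * N : ℕ) : ℝ) = (m + 1) * N := by push_cast; ring
  have hjump := hJ ((m + 1) * N) (Nat.le_mul_of_pos_left N m.succ_pos) a b
    (by rw [hM]; linarith) (by rw [hM]; linarith)
  rw [hM]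
  calc (pairCount x a ((m + 1) * N) : ℝ) / ((m + 1) * N) + 1 / c / (m + 1)
      = ((pairCount x a ((m + 1) * N) : ℝ) + N / c) / ((m + 1) * N) := by field_simp
    _ ≤ _ := by gcongr

noncomputable def gap {N : ℕ} (y : Fin N → ℝ) (i : Fin N) : ℝ := nid (y (finRotate N i) - y i)

lemma gapLengths_eq_image_gap {N : ℕ} (y : Fin N → ℝ) :
    gapLengths y = Finset.univ.image (gap y) := rfl

lemma gap_castSucc {n : ℕ} (y : Fin (n + 1) → ℝ) (j : Fin n) :
    gap y j.castSucc = nid (y j.succ - y j.castSucc) := by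
  rw [gap, finRotate_apply, Fin.coeSucc_eq_succ]

lemma gap_last {n : ℕ} (y : Fin (n + 1) → ℝ) :
    gap y (Fin.last n) = nid (y 0 - y (Fin.last n)) := by
  rw [gap, finRotate_last]

section SortedTuple

open scoped Finset

variable {n : ℕ} {y : Fin (n + 1) → ℝ}

lemma sum_gap_le_one (hy : Monotone y) (hy01 : ∀ i, y i ∈ Ico (0 : ℝ) 1) :
    ∑ i, gap y i ≤ 1 := by
  have hstep : ∀ j : Fin n, gap y j.castSucc ≤ y j.succ - y j.castSucc := fun j => by
    rw [gap_castSucc]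
    exact (nid_le_abs _).trans_eq
      (abs_of_nonneg (sub_nonneg.mpr (hy Fin.castSucc_lt_succ.le)))
  have hwrap : gap y (Fin.last n) ≤ 1 + (y 0 - y (Fin.last n)) := by
    rw [gap_last]
    exact nid_le_one_add (by linarith [(hy01 0).1, (hy01 (Fin.last n)).2])
  have htelescope : ∑ j : Fin n, (y j.succ - y j.castSucc) = y (Fin.last n) - y 0 := by
    rw [Finset.sum_sub_distrib]
    linarith [Fin.sum_univ_succ y, Fin.sum_univ_castSucc y]
  rw [Fin.sum_univ_castSucc]
  linarith [Finset.sum_le_sum fun j (_ : j ∈ Finset.univ) => hstep j]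

lemma gap_castSucc_ne_zero (hy01 : ∀ i, y i ∈ Ico (0 : ℝ) 1) {j : Fin n}
    (h : y j.castSucc < y j.succ) : gap y j.castSucc ≠ 0 := by
  rw [gap_castSucc]
  exact nid_ne_zero (by linarith) (by linarith [(hy01 j.succ).2, (hy01 j.castSucc).1])

/-- Every value of `y` other than `y (last n)` is followed by a positive gap at the last index
where it is taken. -/
lemma card_image_le_card_gap_ne_zero_add_one (hy : Monotone y)
    (hy01 : ∀ i, y i ∈ Ico (0 : ℝ) 1) :
    #(Finset.univ.image y) ≤ #{i | gap y i ≠ 0} + 1 := by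
  suffices h : Finset.univ.image y ⊆
      insert (y (Fin.last n)) (Finset.image y {i | gap y i ≠ 0}) from
    (Finset.card_le_card h).trans
      ((Finset.card_insert_le _ _).trans (Nat.add_le_add_right Finset.card_image_le 1))
  intro v hv
  obtain ⟨i₀, -, rfl⟩ := Finset.mem_image.mp hv
  have hfib : ({i | y i = y i₀} : Finset _).Nonempty := ⟨i₀, by simp⟩
  set i := ({i | y i = y i₀} : Finset _).max' hfib
  have hyi : y i = y i₀ := (Finset.mem_filter.mp (Finset.max'_mem _ hfib)).2
  rcases Fin.eq_castSucc_or_eq_last i with ⟨j, hj⟩ | hlast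
  · have hlt : y j.castSucc < y j.succ := by
      refine (hy Fin.castSucc_lt_succ.le).lt_of_ne fun heq => ?_
      have : j.succ ≤ i := Finset.le_max' _ _ (by simp [← heq, ← hj, hyi])
      exact (hj ▸ Fin.castSucc_lt_succ).not_ge this
    exact Finset.mem_insert_of_mem (Finset.mem_image.mpr
      ⟨i, by simpa [hj] using gap_castSucc_ne_zero hy01 hlt, hyi⟩)
  · exact Finset.mem_insert.mpr (Or.inl (by rw [← hyi, hlast]))

lemma exists_gap_fiber (hy : Monotone y) (hy01 : ∀ i, y i ∈ Ico (0 : ℝ) 1) {k : ℕ}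
    (hk : #(gapLengths y) ≤ k) (hP : 1 < #(Finset.univ.image y)) :
    ∃ L > 0, ∃ F : Finset (Fin (n + 1)), (∀ i ∈ F, gap y i = L) ∧ #F * L ≤ 1 ∧
      (#(Finset.univ.image y) : ℝ) ≤ k * #F + 1 := by
  set S : Finset (Fin (n + 1)) := {i | gap y i ≠ 0}
  have hPS : #(Finset.univ.image y) ≤ #S + 1 :=
    card_image_le_card_gap_ne_zero_add_one hy hy01
  have hS : S.Nonempty := Finset.card_pos.mp (by omega)
  have htk : #(S.image (gap y)) ≤ k :=
    (Finset.card_le_card (Finset.image_subset_image (Finset.subset_univ S))).trans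
      (gapLengths_eq_image_gap y ▸ hk)
  have htpos : (0 : ℝ) < #(S.image (gap y)) := by exact_mod_cast (hS.image _).card_pos
  obtain ⟨L, hL, hLS⟩ := Finset.exists_le_card_fiber_of_nsmul_le_card_of_maps_to
    (b := (#S : ℝ) / #(S.image (gap y))) (fun i hi => Finset.mem_image_of_mem (gap y) hi)
    (hS.image _) (by rw [nsmul_eq_mul, mul_div_cancel₀ _ htpos.ne'])
  set F : Finset (Fin (n + 1)) := {i ∈ S | gap y i = L}
  obtain ⟨i, hiS, rfl⟩ := Finset.mem_image.mp hL
  refine ⟨gap y i, (nid_nonneg _).lt_of_ne' (Finset.mem_filter.mp hiS).2, F,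
    fun j hj => (Finset.mem_filter.mp hj).2, ?_, ?_⟩
  · calc #F * gap y i = ∑ j ∈ F, gap y j := by
          rw [Finset.sum_congr rfl fun j hj => (Finset.mem_filter.mp hj).2, Finset.sum_const,
            nsmul_eq_mul]
      _ ≤ ∑ j, gap y j := Finset.sum_le_sum_of_subset_of_nonneg (Finset.subset_univ F)
          fun j _ _ => nid_nonneg _
      _ ≤ 1 := sum_gap_le_one hy hy01
  · have hSF : (#S : ℝ) ≤ k * #F := by
      rw [div_le_iff₀ htpos] at hLS
      nlinarith [show (#(S.image (gap y)) : ℝ) ≤ k by exact_mod_cast htk]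
    have : (#(Finset.univ.image y) : ℝ) ≤ #S + 1 := by exact_mod_cast hPS
    linarith

end SortedTuple

section Coincidences

open scoped Finset

lemma sq_card_le_card_image_mul_card_fiber_pairs {ι β : Type*} [Fintype ι] [DecidableEq β]
    (y : ι → β) :
    Fintype.card ι ^ 2 ≤ #(Finset.univ.image y) * #{p : ι × ι | y p.1 = y p.2} := by
  have hsum : Fintype.card ι = ∑ v ∈ Finset.univ.image y, #{i | y i = v} :=
    Finset.card_eq_sum_card_image y Finset.univ
  have hsq : #{p : ι × ι | y p.1 = y p.2} =
      ∑ v ∈ Finset.univ.image y, #{i | y i = v} ^ 2 := by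
    rw [Finset.card_eq_sum_card_fiberwise (f := fun p => y p.1)
      fun p _ => Finset.mem_image_of_mem y (Finset.mem_univ p.1)]
    refine Finset.sum_congr rfl fun v _ => ?_
    rw [sq, ← Finset.card_product]
    congr 1
    ext p
    simp only [Finset.mem_filter, Finset.mem_univ, true_and, Finset.mem_product]
    constructor
    · rintro ⟨h, rfl⟩
      exact ⟨rfl, h.symm⟩
    · rintro ⟨h1, h2⟩
      exact ⟨h1.trans h2.symm, h1⟩
  rw [hsum, hsq]
  exact sq_sum_le_card_mul_sum_sq

lemma injective_perm_val_add_one {N : ℕ} (σ : Equiv.Perm (Fin N)) :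
    Function.Injective fun i => (σ i : ℕ) + 1 :=
  fun _ _ h => σ.injective (Fin.ext (Nat.add_right_cancel h))

lemma card_fiber_pairs_le (x : ℕ → ℝ) {N : ℕ} (σ : Equiv.Perm (Fin N)) :
    #{p : Fin N × Fin N | x (σ p.1 + 1) = x (σ p.2 + 1)} ≤ N + pairCount x 0 N := by
  rw [← Finset.card_filter_add_card_filter_not (fun p : Fin N × Fin N => p.1 = p.2)]
  refine add_le_add ?_ ?_
  · calc _ ≤ #(Finset.univ : Finset (Fin N)) :=
          Finset.card_le_card_of_injOn Prod.fst (fun _ _ => Finset.mem_coe.mpr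
            (Finset.mem_univ _)) fun p hp q hq h =>
            Prod.ext h (by rw [← (Finset.mem_filter.mp hp).2, ← (Finset.mem_filter.mp hq).2, h])
      _ = N := by simp
  · rw [pairCount_eq_ncard, ← Set.ncard_coe_finset]
    refine Set.ncard_le_ncard_of_injOn (fun p => ((σ p.1 : ℕ) + 1, (σ p.2 : ℕ) + 1))
      (fun p hp => ?_) (fun p _ q _ h => ?_) (pairSet_finite x 0 N)
    · obtain ⟨hxy, hne⟩ : x (σ p.1 + 1) = x (σ p.2 + 1) ∧ p.1 ≠ p.2 := by simpa using hp
      refine ⟨by omega, (σ p.1).isLt, by omega, (σ p.2).isLt,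
        fun h => hne (injective_perm_val_add_one σ h), ?_⟩
      simp [hxy, nid]
    · obtain ⟨h1, h2⟩ := Prod.ext_iff.mp h
      exact Prod.ext (injective_perm_val_add_one σ h1) (injective_perm_val_add_one σ h2)

lemma card_le_mul_card_image {x : ℕ → ℝ} {N : ℕ} (σ : Equiv.Perm (Fin N)) {C : ℝ}
    (hR : (pairCount x 0 N : ℝ) ≤ C * N) :
    (N : ℝ) ≤ (1 + C) * #(Finset.univ.image fun i : Fin N => x (σ i + 1)) := by
  rcases Nat.eq_zero_or_pos N with rfl | hN
  · simp
  set y := fun i : Fin N => x (σ i + 1)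
  have hCS : (N : ℝ) ^ 2 ≤
      #(Finset.univ.image y) * #{p : Fin N × Fin N | y p.1 = y p.2} := by
    exact_mod_cast Fintype.card_fin N ▸ sq_card_le_card_image_mul_card_fiber_pairs y
  have hE : (#{p : Fin N × Fin N | y p.1 = y p.2} : ℝ) ≤ (1 + C) * N := by
    have : (#{p : Fin N × Fin N | y p.1 = y p.2} : ℝ) ≤ N + pairCount x 0 N := by
      exact_mod_cast card_fiber_pairs_le x σ
    linarith
  have hNpos : (0 : ℝ) < N := by exact_mod_cast hN
  refine le_of_mul_le_mul_left ?_ hNpos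
  calc (N : ℝ) * N = N ^ 2 := (sq _).symm
    _ ≤ #(Finset.univ.image y) * ((1 + C) * N) := hCS.trans (by gcongr)
    _ = N * ((1 + C) * #(Finset.univ.image y)) := by ring

lemma exists_equidistant_pairs {x : ℕ → ℝ} (hx : ∀ n, x n ∈ Ico (0 : ℝ) 1) {N k : ℕ}
    (hN : AtMostGaps x N k) {C : ℝ} (hC : 0 ≤ C) (hR : (pairCount x 0 N : ℝ) ≤ C * N)
    (hNC : 2 * (1 + C) ≤ N) :
    ∃ L > 0, ∃ S : Finset (ℕ × ℕ), (∀ p ∈ S, 1 ≤ p.1 ∧ p.1 ≤ N ∧ 1 ≤ p.2 ∧ p.2 ≤ N ∧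
      p.1 ≠ p.2 ∧ nid (x p.1 - x p.2) = L) ∧ (N : ℝ) ≤ 2 * (1 + C) * k * #S ∧ #S * L ≤ 1 := by
  obtain ⟨σ, hmono, hk⟩ := hN
  have hNP := card_le_mul_card_image σ hR
  set P := #(Finset.univ.image fun i : Fin N => x (σ i + 1))
  obtain ⟨n, rfl⟩ : ∃ n, N = n + 1 :=
    Nat.exists_eq_add_one.mpr (by exact_mod_cast (by linarith : (0 : ℝ) < N))
  have hP : 1 < P := by
    by_contra! hP
    have : (P : ℝ) ≤ 1 := by exact_mod_cast hP
    nlinarith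
  obtain ⟨L, hL, F, hF, hFL, hPF⟩ := exists_gap_fiber hmono (fun i => hx _) hk hP
  have hrot : ∀ i ∈ F, finRotate _ i ≠ i := fun i hi h => by
    have := hF i hi
    rw [gap, h, sub_self] at this
    simp [nid, ← this] at hL
  set S := F.image fun i => ((σ (finRotate _ i) : ℕ) + 1, (σ i : ℕ) + 1)
  have hcard : #S = #F :=
    Finset.card_image_of_injOn fun i _ j _ h =>
      injective_perm_val_add_one σ (Prod.ext_iff.mp h).2
  refine ⟨L, hL, S, fun p hp => ?_, ?_, hcard ▸ hFL⟩
  · obtain ⟨i, hi, rfl⟩ := Finset.mem_image.mp hp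
    exact ⟨by omega, (σ _).isLt, by omega, (σ i).isLt,
      fun h => hrot i hi (injective_perm_val_add_one σ h), hF i hi⟩
  · rw [hcard]
    nlinarith

end Coincidences

lemma exists_pairCountJumps_of_atMostGaps {x : ℕ → ℝ} (hx : ∀ n, x n ∈ Ico (0 : ℝ) 1)
    {N k : ℕ} (hN : AtMostGaps x N k) {C : ℝ} (hC : 0 ≤ C)
    (hR : (pairCount x 0 N : ℝ) ≤ C * N) (hNC : 2 * (1 + C) ≤ N) :
    ∃ L > 0, N * L ≤ 2 * (1 + C) * k ∧ PairCountJumps x N L (N / (2 * (1 + C) * k)) := by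
  obtain ⟨L, hL, S, hS, hNS, hSL⟩ := exists_equidistant_pairs hx hN hC hR hNC
  have hc : 0 < 2 * (1 + C) * k := by
    by_contra! hc
    nlinarith [S.card.cast_nonneg (α := ℝ)]
  refine ⟨L, hL, by nlinarith, fun M hNM a b ha hb => ?_⟩
  have hNS' : (N : ℝ) / (2 * (1 + C) * k) ≤ S.card := by
    rw [div_le_iff₀ hc]
    linarith
  linarith [pairCountJumps_card hS M hNM a b ha hb]

lemma exists_pairCount_zero_le {x : ℕ → ℝ} {f : ℝ → ℝ} (h : HasPairCorr x f) :
    ∃ C ≥ 0, ∀ᶠ N : ℕ in atTop, (pairCount x 0 N : ℝ) ≤ C * N := by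
  refine ⟨|f 0| + 1, by positivity, ?_⟩
  filter_upwards [(h 0 le_rfl).eventually_lt_const (lt_of_le_of_lt (le_abs_self (f 0))
    (lt_add_one _)), eventually_ge_atTop 1] with N hN hN1
  rw [div_lt_iff₀ (by exact_mod_cast hN1)] at hN
  exact hN.le

open Topology in
lemma not_continuousWithinAt_of_jump {f : ℝ → ℝ} {s δ : ℝ} (hs : 0 ≤ s) (hδ : 0 < δ)
    (h : ∀ ε > 0, f (max (s - ε) 0) + δ ≤ f (s + ε)) :
    ¬ ContinuousWithinAt f (Ici 0) s := by
  intro hf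
  have hleft : Tendsto (fun ε => max (s - ε) 0) (𝓝[>] 0) (𝓝[Ici 0] s) := by
    refine tendsto_nhdsWithin_iff.mpr
      ⟨?_, Eventually.of_forall fun ε => mem_Ici.mpr (le_max_right _ _)⟩
    have : Continuous fun ε : ℝ => max (s - ε) 0 := by fun_prop
    simpa [max_eq_left hs] using this.tendsto 0 |>.mono_left nhdsWithin_le_nhds
  have hright : Tendsto (fun ε => s + ε) (𝓝[>] 0) (𝓝[Ici 0] s) := by
    refine tendsto_nhdsWithin_iff.mpr ⟨?_, eventually_nhdsWithin_of_forall fun ε hε =>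
      show 0 ≤ s + ε by linarith [mem_Ioi.mp hε]⟩
    simpa using (tendsto_const_nhds.add tendsto_id).mono_left
      (nhdsWithin_le_nhds (a := (0 : ℝ)) (s := Ioi 0))
  have := le_of_tendsto_of_tendsto ((hf.tendsto.comp hleft).add_const δ)
    (hf.tendsto.comp hright) (eventually_nhdsWithin_of_forall fun ε hε => h ε hε)
  linarith

lemma exists_cluster_value_of_frequently_pairCountJumps {x : ℕ → ℝ} {c : ℝ}
    (hfreq : ∃ᶠ N : ℕ in atTop, ∃ L > 0, N * L ≤ c ∧ PairCountJumps x N L (N / c)) :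
    ∃ t ≥ 0, ∀ r > 0, ∃ᶠ N : ℕ in atTop,
      ∃ L > 0, PairCountJumps x N L (N / c) ∧ |N * L - t| < r := by
  set G : Set ℕ := {N | ∃ L > 0, N * L ≤ c ∧ PairCountJumps x N L (N / c)}
  choose! L hL0 hLc hL using fun N (hN : N ∈ G) => hN
  have : (atTop ⊓ 𝓟 G).NeBot := frequently_mem_iff_neBot.mp hfreq
  obtain ⟨t, ht, hclus⟩ := isCompact_Icc.exists_mapClusterPt (s := Icc 0 c)
    (f := atTop ⊓ 𝓟 G) (u := fun N : ℕ => N * L N) <| le_principal_iff.mpr <|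
      eventually_inf_principal.mpr <| Eventually.of_forall fun N hN =>
        ⟨by have := hL0 N hN; positivity, hLc N hN⟩
  refine ⟨t, ht.1, fun r hr => Frequently.filter_mono (f := atTop ⊓ 𝓟 G) ?_ inf_le_left⟩
  exact ((hclus.frequently (Metric.ball_mem_nhds t hr)).and_eventually
    (eventually_inf_principal.mpr (Eventually.of_forall fun N hN => hN))).mono
    fun N ⟨hNt, hN⟩ => ⟨L N, hL0 N hN, hL N hN, hNt⟩

lemma exists_jump {x : ℕ → ℝ} {f : ℝ → ℝ} (h : HasPairCorr x f) {c : ℝ}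
    (hfreq : ∃ᶠ N : ℕ in atTop, ∃ L > 0, N * L ≤ c ∧ PairCountJumps x N L (N / c)) :
    ∃ t ≥ 0, ∃ δ > 0, ∀ m : ℕ, ∀ ε > 0,
      f (max ((m + 1) * t - ε) 0) + δ / (m + 1) ≤ f ((m + 1) * t + ε) := by
  have hc : 0 < c := by
    obtain ⟨N, ⟨L, hL, hLc, -⟩, hN⟩ := (hfreq.and_eventually (eventually_ge_atTop 1)).exists
    have : (1 : ℝ) ≤ N := by exact_mod_cast hN
    nlinarith
  obtain ⟨t, ht, hnear⟩ := exists_cluster_value_of_frequently_pairCountJumps hfreq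
  refine ⟨t, ht, 1 / c, by positivity, fun m ε hε => ?_⟩
  have hm : (0 : ℝ) < m + 1 := by positivity
  have hscale : Tendsto (fun N : ℕ => (m + 1) * N) atTop atTop :=
    tendsto_atTop_mono (fun N => Nat.le_mul_of_pos_left N m.succ_pos) tendsto_id
  refine (isClosed_le continuous_fst continuous_snd).mem_of_frequently_of_tendsto
    (hscale.frequently (((hnear _ (div_pos hε hm)).and_eventually (eventually_ge_atTop 1)).mono
      fun N ⟨⟨L, hL, hJ, hNt⟩, hN⟩ => ?_))
    (((h _ (le_max_right _ _)).add_const (1 / c / (m + 1))).prodMk_nhds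
      (h ((m + 1) * t + ε) (by positivity)))
  have hbound : |(m + 1) * (N * L) - (m + 1) * t| < ε := by
    rwa [← mul_sub, abs_mul, abs_of_pos hm, ← lt_div_iff₀' hm]
  rw [abs_lt] at hbound
  have hNL : 0 < (m + 1) * (N * L) := by
    have : (1 : ℝ) ≤ N := by exact_mod_cast hN
    positivity
  exact hJ.div_add_le_div hN m (max_lt (by linarith) hNL) (by linarith)

theorem statement1_general (f : ℝ → ℝ)
    (hf_zero : ContinuousWithinAt f (Ici 0) 0)
    (hf_fin : {t : ℝ | 0 ≤ t ∧ ¬ ContinuousWithinAt f (Ici 0) t}.Finite)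
    (x : ℕ → ℝ) (hx : ∀ n, x n ∈ Ico (0 : ℝ) 1) (k : ℕ)
    (hgap : {N : ℕ | AtMostGaps x N k}.Infinite) :
    ¬ HasPairCorr x f := by
  intro h
  obtain ⟨C, hC, hR⟩ := exists_pairCount_zero_le h
  obtain ⟨t, ht, δ, hδ, hjump⟩ := exists_jump h (c := 2 * (1 + C) * k) <|
    (Nat.frequently_atTop_iff_infinite.mpr hgap).and_eventually
      (hR.and (eventually_ge_atTop ⌈2 * (1 + C)⌉₊)) |>.mono fun N ⟨hN, hRN, hNC⟩ =>
        exists_pairCountJumps_of_atMostGaps hx hN hC hRN (Nat.ceil_le.mp hNC)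
  have hdisc : ∀ m : ℕ, ¬ ContinuousWithinAt f (Ici 0) ((m + 1) * t) := fun m =>
    not_continuousWithinAt_of_jump (by positivity) (by positivity) (hjump m)
  rcases ht.eq_or_lt with rfl | ht
  · exact hdisc 0 (by simpa using hf_zero)
  · refine hf_fin.not_infinite (infinite_of_injective_forall_mem
      (f := fun m : ℕ => (m + 1) * t) (fun m n hmn => ?_) fun m => ⟨by positivity, hdisc m⟩)
    simpa using mul_right_cancel₀ ht.ne' hmn

/-- Let `f : [0,∞) → [0,∞)` be non-decreasing, left-continuous on
`(0,∞)`, continuous at `0` (within the domain), and with only finitely many points of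
discontinuity. If the sequence `x` in `[0,1)` is such that for some `k` and infinitely
many `N` the point set `x 1, …, x N` has at most `k` distinct gap lengths, then `x`
does not have `f`-pair correlations. -/
theorem statement1 (f : ℝ → ℝ) (hf_nonneg : ∀ s : ℝ, 0 ≤ s → 0 ≤ f s)
    (hf_mono : MonotoneOn f (Ici 0))
    (hf_left : ∀ t : ℝ, 0 < t → ContinuousWithinAt f (Iio t) t)
    (hf_zero : ContinuousWithinAt f (Ici 0) 0)
    (hf_fin : {t : ℝ | 0 ≤ t ∧ ¬ ContinuousWithinAt f (Ici 0) t}.Finite)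
    (x : ℕ → ℝ) (hx : ∀ n, x n ∈ Ico (0 : ℝ) 1) (k : ℕ)
    (hgap : {N : ℕ | AtMostGaps x N k}.Infinite) :
    ¬ HasPairCorr x f :=
  statement1_general f hf_zero hf_fin x hx k hgap
end

section
/- Let f : [0,∞) → [0,∞) be continuous and non-decreasing, and let (x_N)_{N∈ℕ} be a sequence in [0,1) having f-pair correlations. For each N, assume the points x_1,…,x_N are sorted and let d_N > 0 be one of the circular gap lengths of x_1,…,x_N, with l_N := the number of indices i ∈ {1,…,N} whose circular gap to the successor equals d_N (with x_{N+1} := x_1). If there is a constant U < ∞ with 0 < N·d_N ≤ U for all N, then lim_{N→∞} l_N/N = 0. -/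
/-!
A circular gap of length `d_N < 1/2` between consecutive points `x_a, x_b` gives the two
ordered pairs `(a, b)` and `(b, a)` at distance exactly `d_N`, so
`R(s₂, N) - R(s₁, N) ≥ 2 l_N` whenever `s₁ < N d_N ≤ s₂`. If `l_N / N ≥ ε` infinitely often, pass
to a subsequence along which `N d_N → t`; taking `s₁ < t < s₂` close to `t` gives
`f(s₂) - f(s₁) ≥ 2ε`, which contradicts the continuity of `f` at `t`.
-/

open Filter Set Asymptotics

/-- The circular gap of a (sorted) tuple `y : Fin N → ℝ` at position `i`:
`y (i+1) - y i` for `i < N - 1`, and the wrap-around gap `1 - y (N-1) + y 0` at the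
last position. -/
noncomputable def circGap {N : ℕ} (y : Fin N → ℝ) (i : Fin N) : ℝ :=
  if h : (i : ℕ) + 1 < N then y ⟨(i : ℕ) + 1, h⟩ - y i else 1 - y i + y ⟨0, i.pos⟩

open scoped Finset
open Function

theorem nid_eq_norm (x : ℝ) : nid x = ‖(x : UnitAddCircle)‖ :=
  UnitAddCircle.norm_eq.symm

theorem nid_neg (x : ℝ) : nid (-x) = nid x := by
  simp [nid_eq_norm]

theorem nid_add_one (x : ℝ) : nid (x + 1) = nid x := by
  simp [nid_eq_norm]

theorem nid_of_nonneg_of_le {x : ℝ} (h₀ : 0 ≤ x) (h : x ≤ 1 / 2) : nid x = x := by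
  have hx : |x| ≤ |(1 : ℝ)| / 2 := by rwa [abs_of_nonneg h₀, abs_one]
  rw [nid_eq_norm, (AddCircle.norm_coe_eq_abs_iff 1 one_ne_zero).2 hx, abs_of_nonneg h₀]

theorem Fin.add_one_ne_self {N : ℕ} [NeZero N] (hN : 2 ≤ N) (i : Fin N) : i + 1 ≠ i := by
  intro h
  have := congrArg Fin.val (add_eq_left.1 h)
  simp [Nat.mod_eq_of_lt (show 1 < N by omega)] at this

theorem Fin.add_one_add_one_ne_self {N : ℕ} [NeZero N] (hN : 3 ≤ N) (i : Fin N) :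
    i + 1 + 1 ≠ i := by
  intro h
  have := congrArg Fin.val (add_eq_left.1 ((add_assoc i 1 1).symm.trans h))
  simp [Fin.val_add, Nat.mod_eq_of_lt (show 1 < N by omega),
    Nat.mod_eq_of_lt (show 2 < N by omega)] at this

/-- The wrap-around gap differs from `y 0 - y (N-1)` by `1`, invisible to `nid`. -/
theorem nid_sub_eq_nid_circGap {N : ℕ} [NeZero N] (y : Fin N → ℝ) (i : Fin N) :
    nid (y (i + 1) - y i) = nid (circGap y i) := by
  unfold circGap
  split_ifs with h
  · rw [show (⟨(i : ℕ) + 1, h⟩ : Fin N) = i + 1 from Fin.ext (Fin.val_add_one_of_lt' h).symm]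
  · have hi : i + 1 = ⟨0, i.pos⟩ := by
      ext
      rw [Fin.val_add, Fin.val_one', Nat.add_mod_mod, show (i : ℕ) + 1 = N by omega, Nat.mod_self]
    rw [hi, ← nid_add_one]
    ring_nf

theorem pairCount_eq_card (x : ℕ → ℝ) (s : ℝ) (N : ℕ) :
    pairCount x s N =
      #{p ∈ Finset.Icc 1 N ×ˢ Finset.Icc 1 N | p.1 ≠ p.2 ∧ nid (x p.1 - x p.2) ≤ s / N} := by
  rw [pairCount, ← Set.ncard_coe_finset]
  congr 1
  ext p
  simp only [Finset.coe_filter, Finset.mem_product, Finset.mem_Icc, Set.mem_ofPred_eq]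
  tauto

theorem pairCount_add_card_le (x : ℕ → ℝ) {N : ℕ} {s₁ s₂ : ℝ} (hs : s₁ ≤ s₂)
    (A : Finset (ℕ × ℕ))
    (hA : ∀ p ∈ A, p.1 ∈ Finset.Icc 1 N ∧ p.2 ∈ Finset.Icc 1 N ∧ p.1 ≠ p.2 ∧
      s₁ / N < nid (x p.1 - x p.2) ∧ nid (x p.1 - x p.2) ≤ s₂ / N) :
    pairCount x s₁ N + #A ≤ pairCount x s₂ N := by
  rw [pairCount_eq_card, pairCount_eq_card, ← Finset.card_union_of_disjoint]
  · refine Finset.card_le_card fun p hp => ?_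
    simp only [Finset.mem_union, Finset.mem_filter, Finset.mem_product] at hp ⊢
    rcases hp with ⟨hmem, hne, hle⟩ | hp
    · exact ⟨hmem, hne, hle.trans (by gcongr)⟩
    · obtain ⟨h₁, h₂, hne, -, hle⟩ := hA p hp
      exact ⟨⟨h₁, h₂⟩, hne, hle⟩
  · refine Finset.disjoint_right.2 fun p hp hp' => ?_
    exact (hA p hp).2.2.2.1.not_ge (Finset.mem_filter.1 hp').2.2

theorem pairCount_add_two_mul_card_circGap_le (x : ℕ → ℝ) {N : ℕ} (hN : 3 ≤ N)
    {q : Fin N → ℕ} (hq : Injective q) (hqN : ∀ j, q j ∈ Finset.Icc 1 N) {d s₁ s₂ : ℝ}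
    (hd₀ : 0 < d) (hd : d ≤ 1 / 2) (hs₁ : s₁ < N * d) (hs₂ : N * d ≤ s₂) :
    pairCount x s₁ N + 2 * #{i | circGap (fun j => x (q j)) i = d} ≤ pairCount x s₂ N := by
  have : NeZero N := ⟨by omega⟩
  set G : Finset (Fin N) := {i | circGap (fun j => x (q j)) i = d}
  have hNpos : (0 : ℝ) < N := by exact_mod_cast (show 0 < N by omega)
  have hnid : ∀ i ∈ G,
      nid (x (q (i + 1)) - x (q i)) = d ∧ nid (x (q i) - x (q (i + 1))) = d := by
    intro i hi
    have hgap : nid (x (q (i + 1)) - x (q i)) = d := by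
      rw [nid_sub_eq_nid_circGap (fun j => x (q j)), (Finset.mem_filter.1 hi).2,
        nid_of_nonneg_of_le hd₀.le hd]
    exact ⟨hgap, by rw [← neg_sub, nid_neg, hgap]⟩
  have hdisj :
      Disjoint (G.image fun i => (q (i + 1), q i)) (G.image fun i => (q i, q (i + 1))) := by
    simp only [Finset.disjoint_left, Finset.mem_image, not_exists, not_and]
    rintro _ ⟨a, -, rfl⟩ b - hb
    obtain ⟨h₁, h₂⟩ := Prod.ext_iff.1 hb
    exact Fin.add_one_add_one_ne_self hN a (by rw [← hq h₁]; exact hq h₂)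
  have hcard := Finset.card_union_of_disjoint hdisj
  rw [Finset.card_image_of_injective _ fun a b h => hq (Prod.ext_iff.1 h).2,
    Finset.card_image_of_injective _ fun a b h => hq (Prod.ext_iff.1 h).1, ← two_mul] at hcard
  rw [← hcard]
  refine pairCount_add_card_le x (by linarith) _ ?_
  have hband : s₁ / N < d ∧ d ≤ s₂ / N :=
    ⟨(div_lt_iff₀ hNpos).2 (by linarith), (le_div_iff₀ hNpos).2 (by linarith)⟩
  have hne : ∀ i, q (i + 1) ≠ q i := fun i h => Fin.add_one_ne_self (by omega) i (hq h)
  simp only [Finset.mem_union, Finset.mem_image]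
  rintro _ (⟨i, hi, rfl⟩ | ⟨i, hi, rfl⟩)
  · exact ⟨hqN _, hqN _, hne i, (hnid i hi).1 ▸ hband⟩
  · exact ⟨hqN _, hqN _, (hne i).symm, (hnid i hi).2 ▸ hband⟩

theorem tendsto_zero_of_le_sub_of_tendsto {F : ℕ → ℝ → ℝ} {f : ℝ → ℝ} {a u : ℕ → ℝ} {U : ℝ}
    (hF : ∀ s, 0 ≤ s → Tendsto (fun n => F n s) atTop (nhds (f s)))
    (hf : ContinuousOn f (Ici 0)) (ha : ∀ n, 0 ≤ a n) (hu : ∀ᶠ n in atTop, u n ∈ Ioc 0 U)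
    (hle : ∀ᶠ n in atTop, ∀ s₁ s₂, s₁ < u n → u n ≤ s₂ → a n ≤ F n s₂ - F n s₁) :
    Tendsto a atTop (nhds 0) := by
  refine tendsto_order.2
    ⟨fun b hb => Eventually.of_forall fun n => hb.trans_le (ha n), fun ε hε => ?_⟩
  by_contra hfreq
  obtain ⟨φ, hφ, hφP⟩ := extraction_of_frequently_atTop
    (((not_eventually.1 hfreq).and_eventually hu).and_eventually hle)
  obtain ⟨t, ht, φ', hφ', hut⟩ := tendsto_subseq_of_bounded (Metric.isBounded_Icc 0 U)
    fun k => Ioc_subset_Icc_self (hφP k).1.2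
  rw [isClosed_Icc.closure_eq] at ht
  obtain ⟨δ, hδ, hfδ⟩ := Metric.continuousWithinAt_iff.1 (hf t ht.1) (ε / 2) (half_pos hε)
  set s₁ := max (t - δ / 2) 0
  set s₂ := t + δ / 2 with hs₂
  have hs₂₀ : 0 ≤ s₂ := by linarith [ht.1]
  have hfs : f s₂ - f s₁ < ε := by
    have h₁ := hfδ (le_max_right _ _ : (0 : ℝ) ≤ s₁) <| abs_sub_lt_iff.2
      ⟨by linarith [max_le (by linarith : t - δ / 2 ≤ t) ht.1],
        by linarith [le_max_left (t - δ / 2) 0]⟩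
    have h₂ := hfδ hs₂₀ <| abs_sub_lt_iff.2 ⟨by linarith, by linarith⟩
    rw [Real.dist_eq, abs_lt] at h₁ h₂
    linarith [h₁.1, h₂.2]
  have hψ : Tendsto (φ ∘ φ') atTop atTop := (hφ.comp hφ').tendsto_atTop
  have hFs : ∀ᶠ k in atTop, F (φ (φ' k)) s₂ - F (φ (φ' k)) s₁ < ε :=
    (((hF s₂ hs₂₀).sub (hF s₁ (le_max_right _ _))).comp hψ).eventually
      (eventually_lt_nhds hfs)
  have hus : ∀ᶠ k in atTop, u (φ (φ' k)) ∈ Ioo (t - δ / 2) s₂ :=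
    hut.eventually (Ioo_mem_nhds (by linarith) (by linarith))
  obtain ⟨k, hk, huk⟩ := (hFs.and hus).exists
  obtain ⟨⟨hεk, hu₀, -⟩, hlek⟩ := hφP (φ' k)
  have := hlek s₁ s₂ (max_lt huk.1 hu₀) huk.2.le
  linarith [not_lt.1 hεk]

theorem statement8_general (f : ℝ → ℝ) (hf_cont : ContinuousOn f (Ici 0))
    (x : ℕ → ℝ) (hpc : HasPairCorr x f)
    (σ : ∀ N : ℕ, Equiv.Perm (Fin N)) (d : ℕ → ℝ) (l : ℕ → ℕ)
    (hl : ∀ N, l N = (Finset.univ.filter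
      fun i : Fin N => circGap (fun j : Fin N => x ((σ N j : ℕ) + 1)) i = d N).card)
    (U : ℝ) (hU : ∀ N : ℕ, 1 ≤ N → 0 < (N : ℝ) * d N ∧ (N : ℝ) * d N ≤ U) :
    Tendsto (fun N : ℕ => (l N : ℝ) / N) atTop (nhds 0) := by
  have hle : ∀ᶠ N : ℕ in atTop, ∀ s₁ s₂, s₁ < N * d N → N * d N ≤ s₂ →
      (l N : ℝ) / N ≤ pairCount x s₂ N / N - pairCount x s₁ N / N := by
    filter_upwards [eventually_ge_atTop 3,
      tendsto_natCast_atTop_atTop.eventually_gt_atTop (2 * U)] with N hN hNU s₁ s₂ hs₁ hs₂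
    have hNpos : (0 : ℝ) < N := by positivity
    obtain ⟨hNd₀, hNdU⟩ := hU N (by omega)
    have hgaps := pairCount_add_two_mul_card_circGap_le x hN
      (q := fun j => (σ N j : ℕ) + 1) (fun i j h => (σ N).injective (Fin.ext (by simpa using h)))
      (fun j => Finset.mem_Icc.2 ⟨by omega, (σ N j).isLt⟩) (pos_of_mul_pos_right hNd₀ hNpos.le)
      (by nlinarith) hs₁ hs₂
    rw [← hl] at hgaps
    have hcount : (pairCount x s₁ N : ℝ) + 2 * l N ≤ pairCount x s₂ N := by exact_mod_cast hgaps
    rw [← sub_div]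
    gcongr
    linarith [(l N).cast_nonneg (α := ℝ)]
  exact tendsto_zero_of_le_sub_of_tendsto (F := fun N s => (pairCount x s N : ℝ) / N) hpc hf_cont
    (fun N => by positivity) ((eventually_ge_atTop 1).mono hU) hle

/-- Let `f : [0,∞) → [0,∞)` be continuous and non-decreasing and let
`x` in `[0,1)` have `f`-pair correlations. For each `N` let `σ N` sort the points
`x 1, …, x N`, let `d N > 0` be one of the resulting circular gap lengths, and let
`l N` be the number of positions whose circular gap equals `d N`. If `0 < N * d N ≤ U`
for all `N ≥ 1` and a constant `U`, then `l N / N → 0`. -/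
theorem statement8 (f : ℝ → ℝ) (hf_nonneg : ∀ s : ℝ, 0 ≤ s → 0 ≤ f s)
    (hf_cont : ContinuousOn f (Ici 0)) (hf_mono : MonotoneOn f (Ici 0))
    (x : ℕ → ℝ) (hx : ∀ n, x n ∈ Ico (0 : ℝ) 1) (hpc : HasPairCorr x f)
    (σ : ∀ N : ℕ, Equiv.Perm (Fin N))
    (hsort : ∀ N : ℕ, Monotone (fun i : Fin N => x ((σ N i : ℕ) + 1)))
    (d : ℕ → ℝ) (hd_pos : ∀ N, 0 < d N)
    (hd_gap : ∀ N, 1 ≤ N →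
      ∃ i : Fin N, circGap (fun j : Fin N => x ((σ N j : ℕ) + 1)) i = d N)
    (l : ℕ → ℕ)
    (hl : ∀ N, l N = (Finset.univ.filter
      fun i : Fin N => circGap (fun j : Fin N => x ((σ N j : ℕ) + 1)) i = d N).card)
    (U : ℝ) (hU : ∀ N : ℕ, 1 ≤ N → 0 < (N : ℝ) * d N ∧ (N : ℝ) * d N ≤ U) :
    Tendsto (fun N : ℕ => (l N : ℝ) / N) atTop (nhds 0) :=
  statement8_general f hf_cont x hpc σ d l hl U hU
end
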